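/- (Perturbation of the tensor least squares problem, full column rank case.) Let A and E be real tensors of size n₁×n₂×n₃, Ã = A+E (entrywise), and let B and K be tensors of size n₁×n₄×n₃, B̃ = B+K. Let Ap and Ãp be Moore-Penrose inverses of A and Ã, and set X = Ap*B (the minimal-Frobenius-norm least squares solution of A*X ≈ B), X̃ = Ãp*B̃, H = X̃ − X, and R = B − A*X. Assume rank(Â⁽ⁱ⁾) = rank(Ã̂⁽ⁱ⁾) = n₂ for every i ∈ ZMod n₃ and ‖Ap‖₂·‖E‖₂ < 1, and set γ = 1 − ‖Ap‖₂·‖E‖₂. Then ‖H‖_F ≤ (‖Ap‖₂/γ)·(‖E‖₂·‖X‖_F + ‖K‖_F + (‖Ap‖₂/γ)·‖E‖₂·‖R‖_F) and ‖H‖₂ ≤ (‖Ap‖₂/γ)·(‖E‖₂·‖X‖₂ + ‖K‖₂ + (‖Ap‖₂/γ)·‖E‖₂·‖R‖₂). -/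

import Mathlib

open scoped Matrix.Norms.L2Operator

noncomputable section

/-- The t-product of third-order tensors. -/
def tProd {n₁ n₂ n₃ n₄ : ℕ} [NeZero n₃] (A : Fin n₁ → Fin n₂ → ZMod n₃ → ℝ)
    (B : Fin n₂ → Fin n₄ → ZMod n₃ → ℝ) : Fin n₁ → Fin n₄ → ZMod n₃ → ℝ :=
  fun i j k => ∑ l : Fin n₂, ∑ m : ZMod n₃, A i l (k - m) * B l j m

/-- The Frobenius norm of a third-order tensor. -/
def frobNorm {n₁ n₂ n₃ : ℕ} [NeZero n₃] (A : Fin n₁ → Fin n₂ → ZMod n₃ → ℝ) : ℝ :=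
  Real.sqrt (∑ i : Fin n₁, ∑ j : Fin n₂, ∑ k : ZMod n₃, (A i j k) ^ 2)

/-- The block circulant matrix of a third-order tensor. -/
def bcirc {n₁ n₂ n₃ : ℕ} (A : Fin n₁ → Fin n₂ → ZMod n₃ → ℝ) :
    Matrix (Fin n₁ × ZMod n₃) (Fin n₂ × ZMod n₃) ℝ :=
  fun p q => A p.1 q.1 (p.2 - q.2)

/-- The spectral norm of a third-order tensor: the L2 operator norm of its
block circulant matrix. -/
def specNorm {n₁ n₂ n₃ : ℕ} [NeZero n₃] (A : Fin n₁ → Fin n₂ → ZMod n₃ → ℝ) : ℝ :=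
  ‖bcirc A‖

/-- The identity tensor. -/
def tId (n n₃ : ℕ) : Fin n → Fin n → ZMod n₃ → ℝ :=
  fun i j k => if i = j ∧ k = 0 then 1 else 0

/-- The tensor transpose. -/
def tTrans {n₁ n₂ n₃ : ℕ} (A : Fin n₁ → Fin n₂ → ZMod n₃ → ℝ) :
    Fin n₂ → Fin n₁ → ZMod n₃ → ℝ :=
  fun i j k => A j i (-k)

/-- `X` is a Moore-Penrose inverse of `A`. -/
def IsMPInv {n₁ n₂ n₃ : ℕ} [NeZero n₃] (A : Fin n₁ → Fin n₂ → ZMod n₃ → ℝ)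
    (X : Fin n₂ → Fin n₁ → ZMod n₃ → ℝ) : Prop :=
  tProd (tProd A X) A = A ∧ tProd (tProd X A) X = X ∧
    tTrans (tProd A X) = tProd A X ∧ tTrans (tProd X A) = tProd X A

/-- The `i`-th DFT block of a third-order tensor. -/
def dftBlock {n₁ n₂ n₃ : ℕ} [NeZero n₃] (A : Fin n₁ → Fin n₂ → ZMod n₃ → ℝ) (i : ZMod n₃) :
    Matrix (Fin n₁) (Fin n₂) ℂ :=
  fun p q => ∑ k : ZMod n₃,
    Complex.exp (-2 * Real.pi * Complex.I * (i.val : ℂ) * (k.val : ℂ) / (n₃ : ℂ)) * (A p q k : ℂ)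

end

/-!
Everything is transported to real matrices by `bcirc`, which is additive and multiplicative,
turns the tensor transpose into the matrix transpose, and scales the Frobenius norm by `√n₃`.
Write `M, F, P, Q, N, L` for the block circulants of `A, E, Ap, Atp, B, K`. The DFT
block-diagonalises `bcirc A`, so the rank conditions make `M` and `M + F` injective, whence
`P * M = 1` and `Q * (M + F) = 1`. From the normal equations `Mᴴ (N - M P N) = 0` and
`Q = Q Qᴴ (M + F)ᴴ` one gets

  `Q (N + L) - P N = Q (L - F P N + Qᴴ Fᴴ (N - M P N))`,

and `Q = P ((M + F) Q - F Q)` with `(M + F) Q` an orthogonal projection gives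
`‖Q‖ ≤ ‖P‖ / (1 - ‖P‖ ‖F‖)`. Both the Frobenius and the spectral norm `ν` satisfy
`ν (X * Y) ≤ ‖X‖ * ν Y`, which is all the final estimate uses.
-/

namespace Matrix

lemma mulVec_injective_of_rank_eq {K m n : Type*} [Field K] [Fintype n] {A : Matrix m n K}
    (h : A.rank = Fintype.card n) : Function.Injective A.mulVec := by
  rw [mulVec_injective_iff, linearIndependent_iff_card_eq_finrank_span, ← h,
    rank_eq_finrank_span_cols]
  rfl

variable {𝕜 : Type*} [RCLike 𝕜] {l m n : Type*} [Fintype m] [Fintype n]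

/-- The Frobenius norm, as a plain function, since the `Norm` instance in scope is the L2
operator norm. -/
noncomputable def frobeniusNorm (A : Matrix m n 𝕜) : ℝ := ‖WithLp.toLp 2 (Function.uncurry A)‖

lemma frobeniusNorm_nonneg (A : Matrix m n 𝕜) : 0 ≤ frobeniusNorm A := norm_nonneg _

lemma frobeniusNorm_add_le (A B : Matrix m n 𝕜) :
    frobeniusNorm (A + B) ≤ frobeniusNorm A + frobeniusNorm B :=
  norm_add_le (WithLp.toLp 2 (Function.uncurry A)) (WithLp.toLp 2 (Function.uncurry B))

lemma frobeniusNorm_sq (A : Matrix m n 𝕜) :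
    frobeniusNorm A ^ 2 = ∑ i, ∑ j, ‖A i j‖ ^ 2 := by
  rw [frobeniusNorm, EuclideanSpace.norm_sq_eq, Fintype.sum_prod_type]
  rfl

lemma frobeniusNorm_sq_eq_sum_col (A : Matrix m n 𝕜) :
    frobeniusNorm A ^ 2 = ∑ j, ‖WithLp.toLp 2 (A.col j)‖ ^ 2 := by
  simp only [frobeniusNorm_sq, EuclideanSpace.norm_sq_eq, col_apply]
  exact Finset.sum_comm

lemma frobeniusNorm_mul_le [Fintype l] [DecidableEq m] (A : Matrix l m 𝕜) (B : Matrix m n 𝕜) :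
    frobeniusNorm (A * B) ≤ ‖A‖ * frobeniusNorm B := by
  have hcol (j : n) : ‖WithLp.toLp 2 ((A * B).col j)‖ ≤ ‖A‖ * ‖WithLp.toLp 2 (B.col j)‖ :=
    A.l2_opNorm_mulVec (WithLp.toLp 2 (B.col j))
  refine le_of_sq_le_sq ?_ (mul_nonneg (norm_nonneg A) (frobeniusNorm_nonneg B))
  rw [mul_pow, frobeniusNorm_sq_eq_sum_col, frobeniusNorm_sq_eq_sum_col, Finset.mul_sum]
  gcongr with j
  simpa only [mul_pow] using pow_le_pow_left₀ (norm_nonneg _) (hcol j) 2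

variable {M F : Matrix m n 𝕜} {P Q : Matrix n m 𝕜}

lemma mul_eq_one_of_mul_mul_eq_self [DecidableEq n] (h : M * P * M = M)
    (hM : Function.Injective M.mulVec) : P * M = 1 := by
  refine mulVec_injective (funext fun v => hM ?_)
  rw [mulVec_mulVec, ← Matrix.mul_assoc, h, one_mulVec]

lemma isStarProjection_mul (h₁ : M * P * M = M) (h₃ : (M * P)ᴴ = M * P) :
    IsStarProjection (M * P) where
  isIdempotentElem := by rw [IsIdempotentElem, ← Matrix.mul_assoc, h₁]
  isSelfAdjoint := h₃

lemma conjTranspose_mul_sub_mul_mul_eq_zero (h₁ : M * P * M = M) (h₃ : (M * P)ᴴ = M * P)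
    (N : Matrix m l 𝕜) : Mᴴ * (N - M * (P * N)) = 0 := by
  have : Mᴴ * (M * P) = Mᴴ := by rw [← h₃, ← conjTranspose_mul, h₁]
  rw [Matrix.mul_sub, ← Matrix.mul_assoc M, ← Matrix.mul_assoc, this, sub_self]

lemma eq_mul_conjTranspose_mul_conjTranspose (h₂ : Q * M * Q = Q) (h₃ : (M * Q)ᴴ = M * Q) :
    Q = Q * (Qᴴ * Mᴴ) := by
  rw [← conjTranspose_mul, h₃, ← Matrix.mul_assoc, h₂]

-- The sign is kept inside `-F` so that only subadditivity of the norm is needed afterwards.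
lemma leastSquares_perturbation_eq [DecidableEq n] (h₁ : M * P * M = M)
    (h₃ : (M * P)ᴴ = M * P) (hQ : Q * (M + F) = 1) (hQ₃ : ((M + F) * Q)ᴴ = (M + F) * Q)
    (N L : Matrix m l 𝕜) :
    Q * (N + L) - P * N = Q * (L + -F * (P * N) + Qᴴ * (Fᴴ * (N - M * (P * N)))) := by
  have hQ₂ : Q * (M + F) * Q = Q := by rw [hQ, Matrix.one_mul]
  have hres : Q * (N - M * (P * N)) = Q * (Qᴴ * (Fᴴ * (N - M * (P * N)))) := by
    conv_lhs => rw [eq_mul_conjTranspose_mul_conjTranspose hQ₂ hQ₃]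
    rw [Matrix.mul_assoc, Matrix.mul_assoc, conjTranspose_add, Matrix.add_mul,
      conjTranspose_mul_sub_mul_mul_eq_zero h₁ h₃, zero_add]
  have hPN : Q * (M * (P * N)) + Q * (F * (P * N)) = P * N := by
    rw [← Matrix.mul_add, ← Matrix.add_mul, ← Matrix.mul_assoc, hQ, Matrix.one_mul]
  calc Q * (N + L) - P * N = Q * (N + L) - (Q * (M * (P * N)) + Q * (F * (P * N))) := by
        rw [hPN]
    _ = Q * L + Q * (-F * (P * N)) + Q * (N - M * (P * N)) := by
        simp only [Matrix.mul_add, Matrix.mul_sub, Matrix.neg_mul, Matrix.mul_neg]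
        abel
    _ = _ := by rw [hres, Matrix.mul_add, Matrix.mul_add]

variable [DecidableEq m] [DecidableEq n]

lemma l2_opNorm_le_of_perturbation (hPM : P * M = 1) (hQ : ‖(M + F) * Q‖ ≤ 1)
    (h : ‖P‖ * ‖F‖ < 1) : ‖Q‖ ≤ ‖P‖ / (1 - ‖P‖ * ‖F‖) := by
  have hQ_eq : Q = P * ((M + F) * Q - F * Q) := by
    rw [Matrix.add_mul, add_sub_cancel_right, ← Matrix.mul_assoc, hPM, Matrix.one_mul]
  have : ‖Q‖ ≤ ‖P‖ * (1 + ‖F‖ * ‖Q‖) := calc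
    ‖Q‖ = ‖P * ((M + F) * Q - F * Q)‖ := congrArg norm hQ_eq
    _ ≤ ‖P‖ * ‖(M + F) * Q - F * Q‖ := l2_opNorm_mul _ _
    _ ≤ ‖P‖ * (1 + ‖F‖ * ‖Q‖) := by
      gcongr
      exact (norm_sub_le _ _).trans (add_le_add hQ (l2_opNorm_mul _ _))
  rw [le_div_iff₀ (sub_pos.mpr h)]
  nlinarith

theorem leastSquares_perturbation_le {νm : Matrix m l 𝕜 → ℝ} {νn : Matrix n l 𝕜 → ℝ}
    (hνm_nonneg : ∀ X, 0 ≤ νm X) (hνm_add : ∀ X Y, νm (X + Y) ≤ νm X + νm Y)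
    (hνm_mul : ∀ (A : Matrix m n 𝕜) Y, νm (A * Y) ≤ ‖A‖ * νn Y)
    (hνn_mul : ∀ (A : Matrix n m 𝕜) X, νn (A * X) ≤ ‖A‖ * νm X)
    (hPM : P * M = 1) (h₃ : (M * P)ᴴ = M * P)
    (hQ : Q * (M + F) = 1) (hQ₃ : ((M + F) * Q)ᴴ = (M + F) * Q)
    (h : ‖P‖ * ‖F‖ < 1) (N L : Matrix m l 𝕜) :
    νn (Q * (N + L) - P * N) ≤ ‖P‖ / (1 - ‖P‖ * ‖F‖) *
      (‖F‖ * νn (P * N) + νm L + ‖P‖ / (1 - ‖P‖ * ‖F‖) * ‖F‖ * νm (N - M * (P * N))) := by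
  set c := ‖P‖ / (1 - ‖P‖ * ‖F‖)
  have h₁ : M * P * M = M := by rw [Matrix.mul_assoc, hPM, Matrix.mul_one]
  have hQ₁ : (M + F) * Q * (M + F) = M + F := by rw [Matrix.mul_assoc, hQ, Matrix.mul_one]
  have hQc : ‖Q‖ ≤ c :=
    l2_opNorm_le_of_perturbation hPM (isStarProjection_mul hQ₁ hQ₃).norm_le h
  set R := N - M * (P * N)
  have hS : νm (L + -F * (P * N) + Qᴴ * (Fᴴ * R)) ≤
      νm L + ‖F‖ * νn (P * N) + c * ‖F‖ * νm R := by
    refine (hνm_add _ _).trans (add_le_add ((hνm_add _ _).trans ?_) ?_)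
    · grw [hνm_mul, norm_neg]
    · grw [hνm_mul, hνn_mul, l2_opNorm_conjTranspose, l2_opNorm_conjTranspose, ← hQc, mul_assoc]
      exact hνm_nonneg R
  rw [leastSquares_perturbation_eq h₁ h₃ hQ hQ₃]
  calc νn (Q * (L + -F * (P * N) + Qᴴ * (Fᴴ * R)))
      ≤ ‖Q‖ * νm (L + -F * (P * N) + Qᴴ * (Fᴴ * R)) := hνn_mul _ _
    _ ≤ c * (νm L + ‖F‖ * νn (P * N) + c * ‖F‖ * νm R) := by
      gcongr
      exact hνm_nonneg _
    _ = _ := by ring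

end Matrix

open ZMod in
lemma ZMod.dft_conv {N : ℕ} [NeZero N] (f g : ZMod N → ℂ) (k : ZMod N) :
    𝓕 (fun s => ∑ m, f (s - m) * g m) k = 𝓕 f k * 𝓕 g k := by
  simp only [dft_apply, smul_eq_mul, Finset.mul_sum, Finset.sum_mul]
  rw [Finset.sum_comm]
  refine Finset.sum_congr rfl fun m _ => (Fintype.sum_equiv (Equiv.addRight m) _ _ fun j => ?_).symm
  simp only [Equiv.coe_addRight, add_sub_cancel_right, add_mul, neg_add, AddChar.map_add_eq_mul]
  ring

section Tensor

open Matrix ZMod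

variable {n₁ n₂ n₃ n₄ : ℕ}

@[simp] lemma bcirc_add (A E : Fin n₁ → Fin n₂ → ZMod n₃ → ℝ) :
    bcirc (A + E) = bcirc A + bcirc E := rfl

@[simp] lemma bcirc_sub (A E : Fin n₁ → Fin n₂ → ZMod n₃ → ℝ) :
    bcirc (A - E) = bcirc A - bcirc E := rfl

lemma bcirc_tTrans (A : Fin n₁ → Fin n₂ → ZMod n₃ → ℝ) : bcirc (tTrans A) = (bcirc A)ᴴ := by
  ext p q
  simp [bcirc, tTrans]

variable [NeZero n₃]

@[simp] lemma bcirc_tProd (A : Fin n₁ → Fin n₂ → ZMod n₃ → ℝ)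
    (B : Fin n₂ → Fin n₄ → ZMod n₃ → ℝ) : bcirc (tProd A B) = bcirc A * bcirc B := by
  ext p q
  simp only [bcirc, tProd, mul_apply, Fintype.sum_prod_type]
  refine Finset.sum_congr rfl fun l _ => Fintype.sum_equiv (Equiv.addRight q.2) _ _ fun t => ?_
  simp only [Equiv.coe_addRight, add_sub_cancel_right, sub_sub, add_comm]

lemma IsMPInv.bcirc_mul_mul {A : Fin n₁ → Fin n₂ → ZMod n₃ → ℝ}
    {X : Fin n₂ → Fin n₁ → ZMod n₃ → ℝ} (h : IsMPInv A X) :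
    bcirc A * bcirc X * bcirc A = bcirc A := by
  rw [← bcirc_tProd, ← bcirc_tProd, h.1]

lemma IsMPInv.conjTranspose_bcirc_mul {A : Fin n₁ → Fin n₂ → ZMod n₃ → ℝ}
    {X : Fin n₂ → Fin n₁ → ZMod n₃ → ℝ} (h : IsMPInv A X) :
    (bcirc A * bcirc X)ᴴ = bcirc A * bcirc X := by
  rw [← bcirc_tProd, ← bcirc_tTrans, h.2.2.1]

lemma frobeniusNorm_bcirc (A : Fin n₁ → Fin n₂ → ZMod n₃ → ℝ) :
    frobeniusNorm (bcirc A) = √n₃ * frobNorm A := by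
  rw [frobNorm, ← Real.sqrt_mul (Nat.cast_nonneg _), ← Real.sqrt_sq (frobeniusNorm_nonneg _),
    frobeniusNorm_sq]
  congr 1
  simp only [Fintype.sum_prod_type, Real.norm_eq_abs, sq_abs, Finset.mul_sum]
  refine Finset.sum_congr rfl fun i _ => ?_
  rw [Finset.sum_comm]
  refine Finset.sum_congr rfl fun j _ => ?_
  have hshift (k : ZMod n₃) : ∑ t, A i j (k - t) ^ 2 = ∑ t, A i j t ^ 2 :=
    Fintype.sum_equiv (Equiv.subLeft k) _ _ fun _ => rfl
  simp only [bcirc, hshift, Finset.sum_const, Finset.card_univ, ZMod.card, nsmul_eq_mul,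
    Finset.mul_sum]

lemma dftBlock_apply (A : Fin n₁ → Fin n₂ → ZMod n₃ → ℝ) (i : ZMod n₃) (p : Fin n₁) (q : Fin n₂) :
    dftBlock A i p q = 𝓕 (fun k => (A p q k : ℂ)) i := by
  simp only [dftBlock, dft_apply, smul_eq_mul]
  refine Finset.sum_congr rfl fun k _ => ?_
  rw [show -(k * i) = Int.cast (R := ZMod n₃) (-(k.val * i.val)) by push_cast; simp,
    stdAddChar_coe]
  congr 2
  push_cast
  ring

lemma dftBlock_mulVec_dft (A : Fin n₁ → Fin n₂ → ZMod n₃ → ℝ) (x : Fin n₂ × ZMod n₃ → ℝ)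
    (i : ZMod n₃) :
    dftBlock A i *ᵥ (fun q => 𝓕 (fun m => (x (q, m) : ℂ)) i) =
      fun p => 𝓕 (fun s => ((bcirc A *ᵥ x) (p, s) : ℂ)) i := by
  ext p
  have hconv : (fun s => ((bcirc A *ᵥ x) (p, s) : ℂ)) =
      ∑ q, fun s => ∑ m, (A p q (s - m) : ℂ) * x (q, m) := by
    ext s
    simp [mulVec, dotProduct, Fintype.sum_prod_type, bcirc]
  rw [hconv, map_sum, Finset.sum_apply]
  simp only [mulVec, dotProduct, dftBlock_apply, ← ZMod.dft_conv]

lemma injective_mulVec_bcirc (A : Fin n₁ → Fin n₂ → ZMod n₃ → ℝ)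
    (hA : ∀ i, (dftBlock A i).rank = n₂) : Function.Injective (bcirc A).mulVec := by
  refine (injective_iff_map_eq_zero (bcirc A).mulVecLin).mpr fun x hx => ?_
  rw [mulVecLin_apply] at hx
  have hdft (q : Fin n₂) : 𝓕 (fun m => (x (q, m) : ℂ)) = 0 := by
    ext i
    have hi : dftBlock A i *ᵥ (fun q => 𝓕 (fun m => (x (q, m) : ℂ)) i) = dftBlock A i *ᵥ 0 := by
      rw [dftBlock_mulVec_dft, hx, mulVec_zero]
      ext p
      exact congrFun (map_zero 𝓕) i
    exact congrFun (mulVec_injective_of_rank_eq (by simpa using hA i) hi) q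
  ext ⟨q, m⟩
  simpa using congrFun ((map_eq_zero_iff _ dft.injective).mp (hdft q)) m

end Tensor

open Matrix

theorem least_squares_perturbation_full_rank_general (n₁ n₂ n₃ n₄ : ℕ) [NeZero n₃]
    (A E : Fin n₁ → Fin n₂ → ZMod n₃ → ℝ)
    (B K : Fin n₁ → Fin n₄ → ZMod n₃ → ℝ)
    (Ap Atp : Fin n₂ → Fin n₁ → ZMod n₃ → ℝ)
    (hAp : IsMPInv A Ap) (hAtp : IsMPInv (A + E) Atp)
    (hrankA : ∀ i : ZMod n₃, (dftBlock A i).rank = n₂)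
    (hrankAt : ∀ i : ZMod n₃, (dftBlock (A + E) i).rank = n₂)
    (hE : specNorm Ap * specNorm E < 1) :
    frobNorm (tProd Atp (B + K) - tProd Ap B) ≤
        (specNorm Ap / (1 - specNorm Ap * specNorm E)) *
          (specNorm E * frobNorm (tProd Ap B) + frobNorm K +
            (specNorm Ap / (1 - specNorm Ap * specNorm E)) * specNorm E *
              frobNorm (B - tProd A (tProd Ap B))) ∧
      specNorm (tProd Atp (B + K) - tProd Ap B) ≤
        (specNorm Ap / (1 - specNorm Ap * specNorm E)) *
          (specNorm E * specNorm (tProd Ap B) + specNorm K +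
            (specNorm Ap / (1 - specNorm Ap * specNorm E)) * specNorm E *
              specNorm (B - tProd A (tProd Ap B))) := by
  have hPM := mul_eq_one_of_mul_mul_eq_self hAp.bcirc_mul_mul (injective_mulVec_bcirc A hrankA)
  have hQ := mul_eq_one_of_mul_mul_eq_self hAtp.bcirc_mul_mul
    (injective_mulVec_bcirc (A + E) hrankAt)
  have hQ₃ := hAtp.conjTranspose_bcirc_mul
  rw [bcirc_add] at hQ hQ₃
  have bound := fun {νm νn} hnonneg hadd hmulm hmuln =>
    leastSquares_perturbation_le (νm := νm) (νn := νn) hnonneg hadd hmulm hmuln hPM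
      hAp.conjTranspose_bcirc_mul hQ hQ₃ hE (bcirc B) (bcirc K)
  constructor
  · have hfrob := bound frobeniusNorm_nonneg frobeniusNorm_add_le frobeniusNorm_mul_le
      frobeniusNorm_mul_le
    simp only [← bcirc_tProd, ← bcirc_add, ← bcirc_sub, frobeniusNorm_bcirc] at hfrob
    unfold specNorm
    refine le_of_mul_le_mul_left ?_ (Real.sqrt_pos.mpr (Nat.cast_pos.mpr (NeZero.pos n₃)))
    linear_combination hfrob
  · simpa only [specNorm, bcirc_tProd, bcirc_add, bcirc_sub] using
      bound norm_nonneg norm_add_le l2_opNorm_mul l2_opNorm_mul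

theorem least_squares_perturbation_full_rank (n₁ n₂ n₃ n₄ : ℕ) [NeZero n₃]
    (hn₁ : 0 < n₁) (hn₂ : 0 < n₂) (hn₄ : 0 < n₄)
    (A E : Fin n₁ → Fin n₂ → ZMod n₃ → ℝ)
    (B K : Fin n₁ → Fin n₄ → ZMod n₃ → ℝ)
    (Ap Atp : Fin n₂ → Fin n₁ → ZMod n₃ → ℝ)
    (hAp : IsMPInv A Ap) (hAtp : IsMPInv (A + E) Atp)
    (hrankA : ∀ i : ZMod n₃, (dftBlock A i).rank = n₂)
    (hrankAt : ∀ i : ZMod n₃, (dftBlock (A + E) i).rank = n₂)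
    (hE : specNorm Ap * specNorm E < 1) :
    frobNorm (tProd Atp (B + K) - tProd Ap B) ≤
        (specNorm Ap / (1 - specNorm Ap * specNorm E)) *
          (specNorm E * frobNorm (tProd Ap B) + frobNorm K +
            (specNorm Ap / (1 - specNorm Ap * specNorm E)) * specNorm E *
              frobNorm (B - tProd A (tProd Ap B))) ∧
      specNorm (tProd Atp (B + K) - tProd Ap B) ≤
        (specNorm Ap / (1 - specNorm Ap * specNorm E)) *
          (specNorm E * specNorm (tProd Ap B) + specNorm K +
            (specNorm Ap / (1 - specNorm Ap * specNorm E)) * specNorm E *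
              specNorm (B - tProd A (tProd Ap B))) :=
  least_squares_perturbation_full_rank_general n₁ n₂ n₃ n₄ A E B K Ap Atp hAp hAtp hrankA hrankAt hE
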